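/- arXiv:1603.04822 — 2 statements merged into one kernel-verified Lean document; each statement's English description precedes it below -/
import Mathlib

section
/- Let d, t, k be positive integers with t ≤ k ≤ d and β > 0. Write a = ⌊k/t⌋ and b = k − a·t. If H_b ≥ (β/t)·(b(2d+t−1)/2 − b(b−1)/2), then H_b + ((2d − k + (t − b))/2)·a·β ≥ (k/t)·((2d − k + t)/2)·β. -/
/-! The inequality is in fact an identity plus the hypothesis: writing `k = a t + b`, the target
`(k/t)((2d − k + t)/2)β` exceeds the `a` group terms `((2d − k + t − b)/2) a β` by exactly
`(β/t)(b(2d + t − 1)/2 − b(b − 1)/2) = bβ(2d + t − b)/(2t)`, which is the lower bound on `H_b`. -/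

theorem div_mul_bound_eq_add_of_mul_add_eq {d t k a b β : ℝ} (ht : t ≠ 0) (hk : a * t + b = k) :
    k / t * ((2 * d - k + t) / 2) * β
      = (2 * d - k + (t - b)) / 2 * a * β + β / t * (b * (2 * d + t - 1) / 2 - b * (b - 1) / 2) := by
  subst hk
  field_simp
  ring

theorem Nat.div_mul_add_sub_div_mul (k t : ℕ) : k / t * t + (k - k / t * t) = k :=
  Nat.add_sub_of_le (Nat.div_mul_le_self k t)

theorem mbmr_entropy_accumulation_ineq_general (d t k : ℕ) (ht : 0 < t)
    (a b : ℕ) (ha : a = k / t) (hb : b = k - a * t)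
    (β Hb : ℝ)
    (hacc : Hb ≥ (β / t) * ((b : ℝ) * (2 * d + t - 1) / 2 - (b : ℝ) * (b - 1) / 2)) :
    Hb + ((2 * (d : ℝ) - k + ((t : ℝ) - b)) / 2) * a * β
      ≥ ((k : ℝ) / t) * ((2 * (d : ℝ) - k + t) / 2) * β := by
  have hk : (a : ℝ) * t + b = k := by
    subst ha hb
    exact_mod_cast Nat.div_mul_add_sub_div_mul k t
  rw [ge_iff_le, div_mul_bound_eq_add_of_mul_add_eq (by positivity) hk]
  linarith

/-- Key inequality for the MBMR bound when `t ∤ k`: the entropy accumulation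
hypothesis on `H_b` implies the partitioned file-size bound is at least
`(k/t)((2d − k + t)/2)β`. -/
theorem mbmr_entropy_accumulation_ineq (d t k : ℕ) (hd : 0 < d) (ht : 0 < t)
    (htk : t ≤ k) (hkd : k ≤ d) (a b : ℕ) (ha : a = k / t) (hb : b = k - a * t)
    (β Hb : ℝ) (hβ : 0 < β)
    (hacc : Hb ≥ (β / t) * ((b : ℝ) * (2 * d + t - 1) / 2 - (b : ℝ) * (b - 1) / 2)) :
    Hb + ((2 * (d : ℝ) - k + ((t : ℝ) - b)) / 2) * a * β
      ≥ ((k : ℝ) / t) * ((2 * (d : ℝ) - k + t) / 2) * β :=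
  mbmr_entropy_accumulation_ineq_general d t k ht a b ha hb β Hb hacc
end

section
/- Let d > z ≥ 1 be integers and M^s > 0. Any reconstruction scheme for an (N, M^s, r, z) secret sharing scheme that contacts d shares and downloads s_1 ≥ s_2 ≥ ⋯ ≥ s_d ≥ 0 symbols from them, where the z largest downloads reveal no information (so ∑_{j=z+1}^{d} s_j ≥ M^s must hold), satisfies total bandwidth ∑_{j=1}^{d} s_j ≥ (d/(d−z))·M^s. -/
/-!
Compare both parts of the sum with `t = s (z + 1)`: by monotonicity the head `∑_{j ≤ z} s j` is at
least `z t` and the tail `∑_{j > z} s j` is at most `(d - z) t`. So the head is at least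
`z / (d - z)` times the tail, the total at least `d / (d - z)` times the tail, and the tail is at
least `M^s`.
-/

open Finset

theorem sum_Icc_one_add_sum_Icc_succ {M : Type*} [AddCommMonoid M] (s : ℕ → M) {z d : ℕ}
    (hzd : z ≤ d) :
    ∑ j ∈ Icc 1 z, s j + ∑ j ∈ Icc (z + 1) d, s j = ∑ j ∈ Icc 1 d, s j := by
  simpa only [← Icc_add_one_left_eq_Ioc, zero_add] using
    sum_Ioc_consecutive s (Nat.zero_le z) hzd

section Antitone

variable {𝕜 : Type*} [CommRing 𝕜] [LinearOrder 𝕜] [IsStrictOrderedRing 𝕜] {s : ℕ → 𝕜} {z d : ℕ}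

theorem mul_le_sum_Icc_one_of_antitoneOn (hs : AntitoneOn s (Set.Icc 1 d)) (hzd : z < d) :
    (z : 𝕜) * s (z + 1) ≤ ∑ j ∈ Icc 1 z, s j := by
  have h := card_nsmul_le_sum (Icc 1 z) s (s (z + 1)) fun j hj ↦ by
    rw [mem_Icc] at hj
    exact hs ⟨hj.1, by omega⟩ ⟨by omega, hzd⟩ (by omega)
  simpa using h

theorem sum_Icc_succ_le_mul_of_antitoneOn (hs : AntitoneOn s (Set.Icc 1 d)) (hzd : z < d) :
    ∑ j ∈ Icc (z + 1) d, s j ≤ ((d : 𝕜) - z) * s (z + 1) := by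
  have h := sum_le_card_nsmul (Icc (z + 1) d) s (s (z + 1)) fun j hj ↦ by
    rw [mem_Icc] at hj
    exact hs ⟨by omega, hzd⟩ ⟨by omega, hj.2⟩ hj.1
  simpa [Nat.cast_sub hzd.le] using h

theorem mul_sum_Icc_succ_le_of_antitoneOn (hs : AntitoneOn s (Set.Icc 1 d)) (hzd : z < d) :
    (d : 𝕜) * ∑ j ∈ Icc (z + 1) d, s j ≤ ((d : 𝕜) - z) * ∑ j ∈ Icc 1 d, s j := by
  have hdz : (0 : 𝕜) ≤ (d : 𝕜) - z := sub_nonneg.2 (by exact_mod_cast hzd.le)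
  have head := mul_le_sum_Icc_one_of_antitoneOn hs hzd
  have tail := sum_Icc_succ_le_mul_of_antitoneOn hs hzd
  rw [← sum_Icc_one_add_sum_Icc_succ s hzd.le]
  calc (d : 𝕜) * ∑ j ∈ Icc (z + 1) d, s j
      = z * ∑ j ∈ Icc (z + 1) d, s j + ((d : 𝕜) - z) * ∑ j ∈ Icc (z + 1) d, s j := by ring
    _ ≤ z * (((d : 𝕜) - z) * s (z + 1)) + ((d : 𝕜) - z) * ∑ j ∈ Icc (z + 1) d, s j := by
      gcongr
    _ = ((d : 𝕜) - z) * (z * s (z + 1)) + ((d : 𝕜) - z) * ∑ j ∈ Icc (z + 1) d, s j := by ring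
    _ ≤ ((d : 𝕜) - z) * (∑ j ∈ Icc 1 z, s j + ∑ j ∈ Icc (z + 1) d, s j) := by
      rw [mul_add]
      gcongr

end Antitone

theorem secret_sharing_bandwidth_bound_general (d z : ℕ) (hzd : z < d)
    (Ms : ℝ) (s : ℕ → ℝ)
    (hmono : ∀ i j, 1 ≤ i → i ≤ j → j ≤ d → s j ≤ s i)
    (htail : Ms ≤ ∑ j ∈ Finset.Icc (z + 1) d, s j) :
    ∑ j ∈ Finset.Icc 1 d, s j ≥ ((d : ℝ) / ((d : ℝ) - z)) * Ms := by
  have hdz : (0 : ℝ) < (d : ℝ) - z := sub_pos.2 (by exact_mod_cast hzd)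
  have hs : AntitoneOn s (Set.Icc 1 d) := fun i hi j hj hij ↦ hmono i j hi.1 hij hj.2
  have key := mul_sum_Icc_succ_le_of_antitoneOn hs hzd
  rw [ge_iff_le, div_mul_eq_mul_div, div_le_iff₀ hdz]
  calc (d : ℝ) * Ms ≤ d * ∑ j ∈ Icc (z + 1) d, s j := by gcongr
    _ ≤ _ := key.trans_eq (mul_comm _ _)

/-- Communication bandwidth lower bound for communication-efficient secret
sharing: downloads `s 1 ≥ ⋯ ≥ s d ≥ 0` with `∑_{j=z+1}^d s j ≥ M^s` satisfy
`∑_{j=1}^d s j ≥ (d/(d−z))·M^s`. -/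
theorem secret_sharing_bandwidth_bound (d z : ℕ) (hz : 1 ≤ z) (hzd : z < d)
    (Ms : ℝ) (hMs : 0 < Ms) (s : ℕ → ℝ)
    (hmono : ∀ i j, 1 ≤ i → i ≤ j → j ≤ d → s j ≤ s i)
    (hnonneg : ∀ j, 1 ≤ j → j ≤ d → 0 ≤ s j)
    (htail : Ms ≤ ∑ j ∈ Finset.Icc (z + 1) d, s j) :
    ∑ j ∈ Finset.Icc 1 d, s j ≥ ((d : ℝ) / ((d : ℝ) - z)) * Ms :=
  secret_sharing_bandwidth_bound_general d z hzd Ms s hmono htail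
end
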